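/- arXiv:2111.15125 — 3 statements merged into one kernel-verified Lean document; each statement's English description precedes it below -/
import Mathlib

section
/- Let P(x) = a₄x⁴ + a₃x³ + a₂x² + a₁x + a₀ be a quartic polynomial over a field K of characteristic zero, and define R(x, x₀) = a₄x²x₀² + (a₃/2)·x·x₀·(x + x₀) + (a₂/6)·(x² + x₀²) + (2a₂/3)·x·x₀ + (a₁/2)·(x + x₀) + a₀ and R₁(x, x₀) = ((8a₂a₄ − 3a₃²)/12)·x²x₀² + ((6a₁a₄ − a₂a₃)/6)·x·x₀·(x + x₀) + ((36a₀a₄ − a₂²)/36)·(x² + x₀²) + ((36a₀a₄ + 9a₁a₃ − 5a₂²)/18)·x·x₀ + ((6a₀a₃ − a₁a₂)/6)·(x + x₀) + (8a₀a₂ − 3a₁²)/12. Then for all x, x₀ ∈ K one has R(x, x₀)² + R₁(x, x₀)·(x − x₀)² − P(x)·P(x₀) = 0. -/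
/-- Weil's symmetric bi-quadratic polynomial `R(x, x₀)` attached to the quartic
`P(x) = a₄x⁴ + a₃x³ + a₂x² + a₁x + a₀`. -/
def weilR {K : Type*} [Field K] (a₀ a₁ a₂ a₃ a₄ : K) (x x₀ : K) : K :=
  a₄ * x ^ 2 * x₀ ^ 2 + (a₃ / 2) * x * x₀ * (x + x₀) + (a₂ / 6) * (x ^ 2 + x₀ ^ 2)
    + (2 * a₂ / 3) * x * x₀ + (a₁ / 2) * (x + x₀) + a₀

/-- Weil's second symmetric bi-quadratic polynomial `R₁(x, x₀)`. -/
def weilR₁ {K : Type*} [Field K] (a₀ a₁ a₂ a₃ a₄ : K) (x x₀ : K) : K :=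
  ((8 * a₂ * a₄ - 3 * a₃ ^ 2) / 12) * x ^ 2 * x₀ ^ 2
    + ((6 * a₁ * a₄ - a₂ * a₃) / 6) * x * x₀ * (x + x₀)
    + ((36 * a₀ * a₄ - a₂ ^ 2) / 36) * (x ^ 2 + x₀ ^ 2)
    + ((36 * a₀ * a₄ + 9 * a₁ * a₃ - 5 * a₂ ^ 2) / 18) * x * x₀
    + ((6 * a₀ * a₃ - a₁ * a₂) / 6) * (x + x₀)
    + (8 * a₀ * a₂ - 3 * a₁ ^ 2) / 12

/-- `R(x, x₀)² + R₁(x, x₀)·(x − x₀)² − P(x)·P(x₀) = 0`. -/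
theorem weil_R_R₁_identity {K : Type*} [Field K] [CharZero K] (a₀ a₁ a₂ a₃ a₄ : K)
    (x x₀ : K) :
    weilR a₀ a₁ a₂ a₃ a₄ x x₀ ^ 2 + weilR₁ a₀ a₁ a₂ a₃ a₄ x x₀ * (x - x₀) ^ 2
      - (a₄ * x ^ 4 + a₃ * x ^ 3 + a₂ * x ^ 2 + a₁ * x + a₀)
        * (a₄ * x₀ ^ 4 + a₃ * x₀ ^ 3 + a₂ * x₀ ^ 2 + a₁ * x₀ + a₀) = 0 := by
  unfold weilR weilR₁; field_simp; ring
end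

section
/- Let P(x) = a₄x⁴ + a₃x³ + a₂x² + a₁x + a₀ over a field K of characteristic zero, suppose x, x₀ ∈ K with x ≠ x₀, and w, w₀ ∈ K satisfy w² = P(x) and w₀² = P(x₀). Define f = −4a₀a₄ + a₁a₃ − (1/3)a₂², g = −(8/3)a₀a₂a₄ + a₀a₃² + a₁²a₄ − (1/3)a₁a₂a₃ + (2/27)a₂³, and set ξ = 2(R(x, x₀) − w·w₀)/(x − x₀)² and η = 4·w·w₀·(w − w₀)/(x − x₀)³ − (P'(x)·w₀ + P'(x₀)·w)/(x − x₀)², where R(x, x₀) is Weil's symmetric bi-quadratic polynomial R(x, x₀) = a₄x²x₀² + (a₃/2)·x·x₀·(x + x₀) + (a₂/6)·(x² + x₀²) + (2a₂/3)·x·x₀ + (a₁/2)·(x + x₀) + a₀. Then η² = ξ³ + f·ξ + g. -/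
set_option maxRecDepth 8000 in
set_option maxHeartbeats 1000000 in
/-- Abel–Jacobi map: for points `(x, w)`, `(x₀, w₀)` on the genus-one curve
`w² = P(x)` with `x ≠ x₀`, the point `(ξ, η)` below lies on the Jacobian elliptic curve
`η² = ξ³ + f·ξ + g`, where `f, g` are Hermite's invariants of the quartic `P`. -/
theorem abel_jacobi_image_on_jacobian {K : Type*} [Field K] [CharZero K]
    (a₀ a₁ a₂ a₃ a₄ : K) (x x₀ w w₀ : K) (hxx₀ : x ≠ x₀)
    (hw : w ^ 2 = a₄ * x ^ 4 + a₃ * x ^ 3 + a₂ * x ^ 2 + a₁ * x + a₀)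
    (hw₀ : w₀ ^ 2 = a₄ * x₀ ^ 4 + a₃ * x₀ ^ 3 + a₂ * x₀ ^ 2 + a₁ * x₀ + a₀) :
    let f : K := -4 * a₀ * a₄ + a₁ * a₃ - (1 / 3) * a₂ ^ 2
    let g : K := -(8 / 3) * a₀ * a₂ * a₄ + a₀ * a₃ ^ 2 + a₁ ^ 2 * a₄
      - (1 / 3) * a₁ * a₂ * a₃ + (2 / 27) * a₂ ^ 3
    let ξ : K := 2 * (weilR a₀ a₁ a₂ a₃ a₄ x x₀ - w * w₀) / (x - x₀) ^ 2
    let η : K := 4 * w * w₀ * (w - w₀) / (x - x₀) ^ 3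
      - ((4 * a₄ * x ^ 3 + 3 * a₃ * x ^ 2 + 2 * a₂ * x + a₁) * w₀
          + (4 * a₄ * x₀ ^ 3 + 3 * a₃ * x₀ ^ 2 + 2 * a₂ * x₀ + a₁) * w) / (x - x₀) ^ 2
    η ^ 2 = ξ ^ 3 + f * ξ + g := by
  intro f g ξ η
  have hd : x - x₀ ≠ 0 := sub_ne_zero.mpr hxx₀
  have key : (4 * w * w₀ * (w - w₀) - ((4 * a₄ * x ^ 3 + 3 * a₃ * x ^ 2 + 2 * a₂ * x + a₁) * w₀
      + (4 * a₄ * x₀ ^ 3 + 3 * a₃ * x₀ ^ 2 + 2 * a₂ * x₀ + a₁) * w) * (x - x₀)) ^ 2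
      = (2 * (weilR a₀ a₁ a₂ a₃ a₄ x x₀ - w * w₀)) ^ 3
        + f * (2 * (weilR a₀ a₁ a₂ a₃ a₄ x x₀ - w * w₀)) * (x - x₀) ^ 4
        + g * (x - x₀) ^ 6 := by
    simp only [weilR, f, g, ξ, η]
    linear_combination ((0 : K) + (16 : K)*w₀^4 + (-24 : K)*w*w₀^3 + (16 : K)*w^2*w₀^2 + (-32 : K)*a₄*x₀^4*w₀^2 + (32 : K)*a₄*x₀^4*w*w₀ + (32 : K)*a₄*x*x₀^3*w₀^2 + (-32 : K)*a₄*x*x₀^3*w*w₀ + (-24 : K)*a₄*x^2*x₀^2*w₀^2 + (32 : K)*a₄*x^3*x₀*w₀^2 + (-16 : K)*a₄*x^4*w₀^2 + (16 : K)*a₄^2*x₀^8 + (-32 : K)*a₄^2*x*x₀^7 + (16 : K)*a₄^2*x^2*x₀^6 + (-24 : K)*a₃*x₀^3*w₀^2 + (24 : K)*a₃*x₀^3*w*w₀ + (12 : K)*a₃*x*x₀^2*w₀^2 + (-24 : K)*a₃*x*x₀^2*w*w₀ + (12 : K)*a₃*x^2*x₀*w₀^2 + (-8 : K)*a₃*x^3*w₀^2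 + (24 : K)*a₃*a₄*x₀^7 + (-48 : K)*a₃*a₄*x*x₀^6 + (24 : K)*a₃*a₄*x^2*x₀^5 + (9 : K)*a₃^2*x₀^6 + (-18 : K)*a₃^2*x*x₀^5 + (9 : K)*a₃^2*x^2*x₀^4 + (-20 : K)*a₂*x₀^2*w₀^2 + (16 : K)*a₂*x₀^2*w*w₀ + (16 : K)*a₂*x*x₀*w₀^2 + (-16 : K)*a₂*x*x₀*w*w₀ + (-4 : K)*a₂*x^2*w₀^2 + (16 : K)*a₂*a₄*x₀^6 + (-32 : K)*a₂*a₄*x*x₀^5 + (16 : K)*a₂*a₄*x^2*x₀^4 + (12 : K)*a₂*a₃*x₀^5 + (-24 : K)*a₂*a₃*x*x₀^4 + (12 : K)*a₂*a₃*x^2*x₀^3 + (4 : K)*a₂^2*x₀^4 + (-8 : K)*a₂^2*x*x₀^3 + (4 : K)*a₂^2*x^2*x₀^2 + (-12 : K)*a₁*x₀*w₀^2 + (8 : K)*a₁*x₀*w*w₀ + (4 : K)*a₁*x*w₀^2 + (-8 : K)*a₁*x*w*w₀ + (8 : K)*a₁*a₄*x₀^5 + (-16 : K)*a₁*a₄*x*x₀^4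 + (8 : K)*a₁*a₄*x^2*x₀^3 + (6 : K)*a₁*a₃*x₀^4 + (-12 : K)*a₁*a₃*x*x₀^3 + (6 : K)*a₁*a₃*x^2*x₀^2 + (4 : K)*a₁*a₂*x₀^3 + (-8 : K)*a₁*a₂*x*x₀^2 + (4 : K)*a₁*a₂*x^2*x₀ + a₁^2*x₀^2 + (-2 : K)*a₁^2*x*x₀ + a₁^2*x^2 + (-8 : K)*a₀*w₀^2) * hw + ((0 : K) + (-32 : K)*a₄*x^3*x₀*w*w₀ + (16 : K)*a₄*x^4*w₀^2 + (8 : K)*a₄*x^4*w*w₀ + (-16 : K)*a₄^2*x^4*x₀^4 + (32 : K)*a₄^2*x^5*x₀^3 + (-8 : K)*a₄^2*x^6*x₀^2 + (-24 : K)*a₃*x^2*x₀*w*w₀ + (16 : K)*a₃*x^3*w₀^2 + (-16 : K)*a₃*a₄*x^3*x₀^4 + (24 : K)*a₃*a₄*x^4*x₀^3 + (12 : K)*a₃*a₄*x^5*x₀^2 + (-4 : K)*a₃*a₄*x^6*x₀ + (-8 : K)*a₃^2*x^3*x₀^3 + (21 : K)*a₃^2*x^4*x₀^2 + (-6 : K)*a₃^2*x^5*x₀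 + a₃^2*x^6 + (-16 : K)*a₂*x*x₀*w*w₀ + (16 : K)*a₂*x^2*w₀^2 + (-8 : K)*a₂*x^2*w*w₀ + (-16 : K)*a₂*a₄*x^2*x₀^4 + (32 : K)*a₂*a₄*x^3*x₀^3 + (-12 : K)*a₂*a₄*x^4*x₀^2 + (16 : K)*a₂*a₄*x^5*x₀ + (-4 : K)*a₂*a₄*x^6 + (-8 : K)*a₂*a₃*x^2*x₀^3 + (20 : K)*a₂*a₃*x^3*x₀^2 + (4 : K)*a₂*a₃*x^4*x₀ + (8 : K)*a₂^2*x^3*x₀ + (-8 : K)*a₁*x₀*w*w₀ + (16 : K)*a₁*x*w₀^2 + (-16 : K)*a₁*x*w*w₀ + (-16 : K)*a₁*a₄*x*x₀^4 + (32 : K)*a₁*a₄*x^2*x₀^3 + (-16 : K)*a₁*a₄*x^3*x₀^2 + (20 : K)*a₁*a₄*x^4*x₀ + (-4 : K)*a₁*a₄*x^5 + (-8 : K)*a₁*a₃*x*x₀^3 + (18 : K)*a₁*a₃*x^2*x₀^2 + (4 : K)*a₁*a₃*x^3*x₀ + (2 : K)*a₁*a₃*x^4 + (12 : K)*a₁*a₂*x^2*x₀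 + (4 : K)*a₁*a₂*x^3 + a₁^2*x₀^2 + (2 : K)*a₁^2*x*x₀ + (5 : K)*a₁^2*x^2 + (16 : K)*a₀*w₀^2 + (-24 : K)*a₀*w*w₀ + (-16 : K)*a₀*a₄*x₀^4 + (32 : K)*a₀*a₄*x*x₀^3 + (-24 : K)*a₀*a₄*x^2*x₀^2 + (32 : K)*a₀*a₄*x^3*x₀ + (-8 : K)*a₀*a₄*x^4 + (-8 : K)*a₀*a₃*x₀^3 + (12 : K)*a₀*a₃*x*x₀^2 + (12 : K)*a₀*a₃*x^2*x₀ + (-4 : K)*a₀*a₂*x₀^2 + (16 : K)*a₀*a₂*x*x₀ + (4 : K)*a₀*a₂*x^2 + (4 : K)*a₀*a₁*x₀ + (12 : K)*a₀*a₁*x + (8 : K)*a₀^2) * hw₀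
  have hη : η = (4 * w * w₀ * (w - w₀) - ((4 * a₄ * x ^ 3 + 3 * a₃ * x ^ 2 + 2 * a₂ * x + a₁) * w₀
      + (4 * a₄ * x₀ ^ 3 + 3 * a₃ * x₀ ^ 2 + 2 * a₂ * x₀ + a₁) * w) * (x - x₀)) / (x - x₀) ^ 3 := by
    show 4 * w * w₀ * (w - w₀) / (x - x₀) ^ 3
      - ((4 * a₄ * x ^ 3 + 3 * a₃ * x ^ 2 + 2 * a₂ * x + a₁) * w₀
          + (4 * a₄ * x₀ ^ 3 + 3 * a₃ * x₀ ^ 2 + 2 * a₂ * x₀ + a₁) * w) / (x - x₀) ^ 2 = _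
    rw [div_sub_div _ _ (pow_ne_zero 3 hd) (pow_ne_zero 2 hd), div_eq_div_iff
      (mul_ne_zero (pow_ne_zero 3 hd) (pow_ne_zero 2 hd)) (pow_ne_zero 3 hd)]
    ring
  have hξ : ξ = 2 * (weilR a₀ a₁ a₂ a₃ a₄ x x₀ - w * w₀) / (x - x₀) ^ 2 := rfl
  set m := 4 * w * w₀ * (w - w₀) - ((4 * a₄ * x ^ 3 + 3 * a₃ * x ^ 2 + 2 * a₂ * x + a₁) * w₀
      + (4 * a₄ * x₀ ^ 3 + 3 * a₃ * x₀ ^ 2 + 2 * a₂ * x₀ + a₁) * w) * (x - x₀) with hm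
  set n := 2 * (weilR a₀ a₁ a₂ a₃ a₄ x x₀ - w * w₀) with hn
  show η ^ 2 = ξ ^ 3 + f * ξ + g
  rw [hη, hξ, div_pow, div_pow, key, ← pow_mul, ← pow_mul]
  field_simp
  ring
end

section
/- There exists a matrix U ∈ GL(10, ℤ) such that Uᵀ·G₁·U = G₂, where G₁ is the Gram matrix of H ⊕ E₈(−2) and G₂ is the Gram matrix of H(2) ⊕ N; here H is the even unimodular hyperbolic plane with Gram matrix [[0,1],[1,0]], E₈(−2) is the E₈ root lattice with form negated and scaled by 2, H(2) has Gram matrix [[0,2],[2,0]], and N is the Nikulin lattice of rank 8, i.e. the even overlattice of A₁(−1)^⊕8 generated by the eight orthogonal vectors e₁,...,e₈ of square −2 and the glue vector (e₁ + ⋯ + e₈)/2. -/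
/-- Gram matrix of `H ⊕ E₈(−2)`: the hyperbolic plane `H = [[0,1],[1,0]]` followed by the
`E₈` root lattice (Bourbaki numbering: node 2 attached to node 4 of the chain
1−3−4−5−6−7−8) with its bilinear form negated and scaled by 2. -/
def gramHE8m2 : Matrix (Fin 10) (Fin 10) ℤ :=
  !![0, 1, 0, 0, 0, 0, 0, 0, 0, 0;
     1, 0, 0, 0, 0, 0, 0, 0, 0, 0;
     0, 0, -4, 0, 2, 0, 0, 0, 0, 0;
     0, 0, 0, -4, 0, 2, 0, 0, 0, 0;
     0, 0, 2, 0, -4, 2, 0, 0, 0, 0;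
     0, 0, 0, 2, 2, -4, 2, 0, 0, 0;
     0, 0, 0, 0, 0, 2, -4, 2, 0, 0;
     0, 0, 0, 0, 0, 0, 2, -4, 2, 0;
     0, 0, 0, 0, 0, 0, 0, 2, -4, 2;
     0, 0, 0, 0, 0, 0, 0, 0, 2, -4]

/-- Gram matrix of `H(2) ⊕ N`: the scaled hyperbolic plane `[[0,2],[2,0]]` followed by the
Nikulin lattice `N`, the even overlattice of `A₁(−1)^⊕8` generated by orthogonal vectors
`e₁, …, e₈` of square −2 and the glue vector `(e₁ + ⋯ + e₈)/2`, in the basis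
`e₁, …, e₇, (e₁ + ⋯ + e₈)/2`. -/
def gramH2N : Matrix (Fin 10) (Fin 10) ℤ :=
  !![0, 2, 0, 0, 0, 0, 0, 0, 0, 0;
     2, 0, 0, 0, 0, 0, 0, 0, 0, 0;
     0, 0, -2, 0, 0, 0, 0, 0, 0, -1;
     0, 0, 0, -2, 0, 0, 0, 0, 0, -1;
     0, 0, 0, 0, -2, 0, 0, 0, 0, -1;
     0, 0, 0, 0, 0, -2, 0, 0, 0, -1;
     0, 0, 0, 0, 0, 0, -2, 0, 0, -1;
     0, 0, 0, 0, 0, 0, 0, -2, 0, -1;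
     0, 0, 0, 0, 0, 0, 0, 0, -2, -1;
     0, 0, -1, -1, -1, -1, -1, -1, -1, -4]

/-- The explicit base-change matrix. -/
def Umat : Matrix (Fin 10) (Fin 10) ℤ :=
  !![2, 8, 1, 1, 1, 1, 1, 1, 1, 1;
     2, 14, 1, 1, 1, 1, 1, 1, 1, 0;
     4, 21, 2, 2, 2, 2, 2, 2, 2, 1;
     5, 28, 3, 3, 3, 3, 3, 3, 3, 3;
     7, 38, 3, 4, 4, 4, 4, 4, 4, 3;
     10, 55, 5, 5, 6, 6, 6, 6, 6, 5;
     8, 44, 4, 4, 4, 5, 5, 5, 5, 4;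
     6, 33, 3, 3, 3, 3, 4, 4, 4, 3;
     4, 22, 2, 2, 2, 2, 2, 3, 3, 2;
     2, 11, 1, 1, 1, 1, 1, 1, 2, 1]

/-- Its inverse. -/
def Vmat : Matrix (Fin 10) (Fin 10) ℤ :=
  !![7, 4, -4, -1, 0, 0, 0, 0, 0, 0;
     1, 1, -1, 0, 0, 0, 0, 0, 0, 0;
     -4, -3, 4, 1, -1, 0, 0, 0, 0, 0;
     -4, -3, 3, 1, 1, -1, 0, 0, 0, 0;
     -4, -3, 3, 0, 0, 1, -1, 0, 0, 0;
     -4, -3, 3, 0, 0, 0, 1, -1, 0, 0;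
     -4, -3, 3, 0, 0, 0, 0, 1, -1, 0;
     -4, -3, 3, 0, 0, 0, 0, 0, 1, -1;
     -4, -3, 3, 0, 0, 0, 0, 0, 0, 1;
     7, 5, -6, 0, 0, 0, 0, 0, 0, 0]

/-- the lattices `H ⊕ E₈(−2)` and `H(2) ⊕ N` are isomorphic, i.e. their Gram
matrices are congruent over ℤ by a matrix `U ∈ GL(10, ℤ)`. -/
theorem HE8m2_isometric_H2N :
    ∃ U : Matrix (Fin 10) (Fin 10) ℤ, IsUnit U.det ∧ U.transpose * gramHE8m2 * U = gramH2N := by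
  refine ⟨Umat, Matrix.isUnit_det_of_right_inverse (B := Vmat) ?_, ?_⟩ <;> decide
end
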